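/- arXiv:2405.10770 — 4 statements merged into one kernel-verified Lean document; each statement's English description precedes it below -/
import Mathlib

section
/- Let ε, κ be reals with 0 < ε, ε + ε² < κ < 1/2, let φ ∈ ℝ, and in ℝ² let ξ = (1, 0) and ζ = (cos φ, sin φ). Then: (i) the operator inequality P_ξ + (1−ε) P_ξ^⊥ ≥ (1 − 2 sin² φ) (P_ζ + (1−κ) P_ζ^⊥) holds; and (ii) if β ≥ 0 satisfies P_ξ + (1−ε) P_ξ^⊥ ≥ β (P_ζ + (1−κ) P_ζ^⊥), then β ≤ 1. -/
/-!
Write `s = sin φ`, `c = cos φ`, `u = s²`. In coordinates `w = (x, y)` one has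
`⟪A w, w⟫ = (1 - ε)‖w‖² + ε x²` and `⟪B w, w⟫ = (1 - κ)‖w‖² + κ (c x + s y)²`, so the form of
`A - (1 - 2u) B` has matrix entries `a = u (2 + κ - 2κu)`, `b = -(1 - 2u) κ c s` and
`d = κ - ε + (2 - 3κ) u + 2κu²`. Here `a, d ≥ 0`, and `ad - b² = u (κ (2 - ε) - 2ε + (4 - 4κ + 2κε) u)`
is nonnegative because `κ (2 - ε) - 2ε > ε² (1 - ε) > 0`.
For (ii), test the inequality at `w = ζ`, where `⟪B ζ, ζ⟫ = 1` and `⟪A ζ, ζ⟫ = 1 - ε s²`.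
-/

open scoped InnerProductSpace
open Real

/-- The vector `(a, b)` in the Euclidean plane. -/
noncomputable def vec2 (a b : ℝ) : EuclideanSpace ℝ (Fin 2) :=
  (WithLp.equiv 2 (Fin 2 → ℝ)).symm ![a, b]

theorem quadratic_nonneg_of_sq_le_mul {a b d : ℝ} (ha : 0 ≤ a) (hd : 0 ≤ d) (hb : b ^ 2 ≤ a * d)
    (x y : ℝ) : 0 ≤ a * x ^ 2 + 2 * b * x * y + d * y ^ 2 := by
  rcases ha.eq_or_lt with rfl | ha
  · have hb0 : b = 0 := by nlinarith [sq_nonneg b]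
    subst hb0
    nlinarith [sq_nonneg y]
  · have hscaled : 0 ≤ a * (a * x ^ 2 + 2 * b * x * y + d * y ^ 2) := by
      nlinarith [sq_nonneg (a * x + b * y), mul_nonneg (sub_nonneg.2 hb) (sq_nonneg y)]
    exact nonneg_of_mul_nonneg_right hscaled ha

theorem inner_proj_add_smul_proj_orthogonal_self {E : Type*} [NormedAddCommGroup E]
    [InnerProductSpace ℝ E] (v x : E) (δ : ℝ) :
    ⟪⟪v, x⟫_ℝ • v + (1 - δ) • (x - ⟪v, x⟫_ℝ • v), x⟫_ℝ = (1 - δ) * ‖x‖ ^ 2 + δ * ⟪v, x⟫_ℝ ^ 2 := by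
  rw [inner_add_left, real_inner_smul_left, real_inner_smul_left, inner_sub_left,
    real_inner_smul_left, real_inner_self_eq_norm_sq]
  ring

@[simp]
theorem vec2_apply_zero (a b : ℝ) : vec2 a b 0 = a := rfl

@[simp]
theorem vec2_apply_one (a b : ℝ) : vec2 a b 1 = b := rfl

theorem inner_vec2 (a b : ℝ) (w : EuclideanSpace ℝ (Fin 2)) :
    ⟪vec2 a b, w⟫_ℝ = a * w 0 + b * w 1 := by
  simp [vec2, PiLp.inner_apply, Fin.sum_univ_two, mul_comm]

theorem norm_sq_eq_sq_add_sq (w : EuclideanSpace ℝ (Fin 2)) : ‖w‖ ^ 2 = w 0 ^ 2 + w 1 ^ 2 := by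
  simp [EuclideanSpace.norm_sq_eq, Fin.sum_univ_two]

theorem one_sub_two_mul_sq_mul_le_of_sq_add_sq_eq_one {ε κ s c : ℝ} (hε : 0 < ε)
    (hεκ : ε + ε ^ 2 < κ) (hκ : κ < 1 / 2) (hsc : s ^ 2 + c ^ 2 = 1) (x y : ℝ) :
    (1 - 2 * s ^ 2) * ((1 - κ) * (x ^ 2 + y ^ 2) + κ * (c * x + s * y) ^ 2)
      ≤ (1 - ε) * (x ^ 2 + y ^ 2) + ε * x ^ 2 := by
  set u := s ^ 2 with hu
  have hu0 : 0 ≤ u := sq_nonneg s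
  have hε1 : ε < 1 := by nlinarith
  have hconst : 0 < κ * (2 - ε) - 2 * ε := by nlinarith [mul_pos (mul_pos hε hε) (sub_pos.2 hε1)]
  have hdiff : (1 - ε) * (x ^ 2 + y ^ 2) + ε * x ^ 2
      - (1 - 2 * u) * ((1 - κ) * (x ^ 2 + y ^ 2) + κ * (c * x + s * y) ^ 2)
      = u * (2 + κ - 2 * κ * u) * x ^ 2 + 2 * (-((1 - 2 * u) * κ * c * s)) * x * y
        + (κ - ε + (2 - 3 * κ) * u + 2 * κ * u ^ 2) * y ^ 2 := by
    rw [hu]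
    linear_combination (-(1 - 2 * s ^ 2) * κ * x ^ 2) * hsc
  have hdet : (-((1 - 2 * u) * κ * c * s)) ^ 2
      ≤ u * (2 + κ - 2 * κ * u) * (κ - ε + (2 - 3 * κ) * u + 2 * κ * u ^ 2) := by
    have hc : c ^ 2 = 1 - u := by linarith
    have hdet_eq : u * (2 + κ - 2 * κ * u) * (κ - ε + (2 - 3 * κ) * u + 2 * κ * u ^ 2)
        - (-((1 - 2 * u) * κ * c * s)) ^ 2
        = u * (κ * (2 - ε) - 2 * ε + (4 - 4 * κ + 2 * κ * ε) * u) := by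
      rw [hu] at hc ⊢
      linear_combination (-(1 - 2 * s ^ 2) ^ 2 * κ ^ 2 * s ^ 2) * hc
    have hslope : 0 ≤ 4 - 4 * κ + 2 * κ * ε := by nlinarith
    rw [← sub_nonneg, hdet_eq]
    exact mul_nonneg hu0 (add_nonneg hconst.le (mul_nonneg hslope hu0))
  have ha : 0 ≤ u * (2 + κ - 2 * κ * u) := mul_nonneg hu0 (by nlinarith)
  have hd : 0 ≤ κ - ε + (2 - 3 * κ) * u + 2 * κ * u ^ 2 := by nlinarith
  linarith [quadratic_nonneg_of_sq_le_mul ha hd hdet x y]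

/-- With `ξ = (1,0)`, `ζ = (cos φ, sin φ)`, `A = P_ξ + (1-ε) P_ξ^⊥` and
`B = P_ζ + (1-κ) P_ζ^⊥`, for `0 < ε`, `ε + ε² < κ < 1/2`:
(i) `A ≥ (1 - 2 sin² φ) B`, and (ii) any `β ≥ 0` with `A ≥ β B` satisfies `β ≤ 1`. -/
theorem two_rank_one_perturbations_comparison
    (ε κ φ : ℝ) (hε : 0 < ε) (hεκ : ε + ε ^ 2 < κ) (hκ : κ < 1 / 2)
    (A B : EuclideanSpace ℝ (Fin 2) →L[ℝ] EuclideanSpace ℝ (Fin 2))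
    (hA : ∀ x, A x = ⟪vec2 1 0, x⟫_ℝ • vec2 1 0
        + (1 - ε) • (x - ⟪vec2 1 0, x⟫_ℝ • vec2 1 0))
    (hB : ∀ x, B x = ⟪vec2 (cos φ) (sin φ), x⟫_ℝ • vec2 (cos φ) (sin φ)
        + (1 - κ) • (x - ⟪vec2 (cos φ) (sin φ), x⟫_ℝ • vec2 (cos φ) (sin φ))) :
    (∀ w, (1 - 2 * sin φ ^ 2) * ⟪B w, w⟫_ℝ ≤ ⟪A w, w⟫_ℝ) ∧
    (∀ β : ℝ, 0 ≤ β → (∀ w, β * ⟪B w, w⟫_ℝ ≤ ⟪A w, w⟫_ℝ) → β ≤ 1) := by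
  have hAw : ∀ w, ⟪A w, w⟫_ℝ = (1 - ε) * (w 0 ^ 2 + w 1 ^ 2) + ε * w 0 ^ 2 := fun w => by
    rw [hA, inner_proj_add_smul_proj_orthogonal_self, inner_vec2, norm_sq_eq_sq_add_sq]
    ring
  have hBw : ∀ w, ⟪B w, w⟫_ℝ
      = (1 - κ) * (w 0 ^ 2 + w 1 ^ 2) + κ * (cos φ * w 0 + sin φ * w 1) ^ 2 := fun w => by
    rw [hB, inner_proj_add_smul_proj_orthogonal_self, inner_vec2, norm_sq_eq_sq_add_sq]
  have hsc : sin φ ^ 2 + cos φ ^ 2 = 1 := sin_sq_add_cos_sq φ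
  refine ⟨fun w => ?_, fun β _ hβ => ?_⟩
  · rw [hAw, hBw]
    exact one_sub_two_mul_sq_mul_le_of_sq_add_sq_eq_one hε hεκ hκ hsc (w 0) (w 1)
  · have hζ := hβ (vec2 (cos φ) (sin φ))
    rw [hAw, hBw] at hζ
    simp only [vec2_apply_zero, vec2_apply_one] at hζ
    have hBζ : (1 - κ) * (cos φ ^ 2 + sin φ ^ 2) + κ * (cos φ * cos φ + sin φ * sin φ) ^ 2 = 1 := by
      linear_combination (1 + κ + κ * (sin φ ^ 2 + cos φ ^ 2 - 1)) * hsc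
    have hAζ : (1 - ε) * (cos φ ^ 2 + sin φ ^ 2) + ε * cos φ ^ 2 = 1 - ε * sin φ ^ 2 := by
      linear_combination hsc
    rw [hBζ, hAζ] at hζ
    nlinarith [mul_nonneg hε.le (sq_nonneg (sin φ))]
end

section
/- Let H be a complex Hilbert space, T_1 ≥ T_2 ≥ ⋯ a decreasing sequence of positive linear contractions on H, T the strong operator limit of (T_n), and P the orthogonal projection onto {ξ ∈ H : Tξ = ξ}. Let σ : ℕ → ℕ be proper and S_n^σ := T_{σ(n)} ⋯ T_{σ(1)}. If ξ ∈ H is such that the set {S_n^σ ξ : n ∈ ℕ} is totally bounded in H, then ‖S_n^σ ξ − P ξ‖ → 0. -/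
open Filter Topology
open scoped InnerProductSpace ComplexOrder

/-- `prodSeq T σ n = T (σ n) ∘ ⋯ ∘ T (σ 0)`. -/
noncomputable def prodSeq {H : Type*} [NormedAddCommGroup H] [InnerProductSpace ℂ H]
    (T : ℕ → H →L[ℂ] H) (σ : ℕ → ℕ) : ℕ → H →L[ℂ] H
  | 0 => T (σ 0)
  | (n + 1) => (T (σ (n + 1))).comp (prodSeq T σ n)

/-!
For a positive contraction `A` one has `‖A x - x‖² ≤ ‖x‖² - ‖A x‖²`, so the norms along the orbit
`u n = S_n^σ ξ` decrease and the steps `u (n + 1) - u n` tend to `0`. As `σ` is proper,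
`T (σ n) → T` strongly, hence every cluster point `η` of the orbit is fixed by `T`. Monotonicity
of `⟪T n ζ, ζ⟫` forces every `T`-fixed vector `ζ` to be fixed by each `T k`, so `⟪u n, ζ⟫ = ⟪ξ, ζ⟫`
and therefore `⟪η, ζ⟫ = ⟪ξ, ζ⟫`; this characterises `η = P ξ`. Total boundedness puts the orbit in
a compact set, where a sequence with a unique cluster point converges.
-/

namespace ContinuousLinearMap

variable {H : Type*} [NormedAddCommGroup H] [InnerProductSpace ℂ H] {A : H →L[ℂ] H}

theorem isPositive_of_inner_nonneg (h : ∀ x, 0 ≤ ⟪A x, x⟫_ℂ) : A.IsPositive :=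
  (isPositive_iff_complex A).2 fun x =>
    ⟨(Complex.eq_re_of_ofReal_le (r := 0) (by rw [Complex.ofReal_zero]; exact h x)).symm,
      (Complex.nonneg_iff.1 (h x)).1⟩

/-- Cauchy–Schwarz for the semi-inner product `⟪A ·, ·⟫`. -/
theorem IsPositive.norm_inner_mul_norm_inner_le (hA : A.IsPositive) (x y : H) :
    ‖⟪A x, y⟫_ℂ‖ * ‖⟪A y, x⟫_ℂ‖ ≤ (⟪A x, x⟫_ℂ).re * (⟪A y, y⟫_ℂ).re :=
  letI : PreInnerProductSpace.Core ℂ H :=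
    { inner := fun u v => ⟪A u, v⟫_ℂ
      conj_inner_symm := fun u v => by
        simp only [inner_conj_symm, hA.inner_left_eq_inner_right]
      re_inner_nonneg := hA.re_inner_nonneg_left
      add_left := fun u v w => by simp only [map_add, inner_add_left]
      smul_left := fun u v r => by simp only [map_smul, inner_smul_left] }
  @InnerProductSpace.Core.inner_mul_inner_self_le ℂ H _ _ _ this x y

theorem re_inner_apply_self_le_norm_sq (hA : ‖A‖ ≤ 1) (x : H) :
    (⟪A x, x⟫_ℂ).re ≤ ‖x‖ ^ 2 :=
  calc (⟪A x, x⟫_ℂ).re ≤ ‖A x‖ * ‖x‖ := (Complex.re_le_norm _).trans (norm_inner_le_norm _ _)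
    _ ≤ ‖x‖ * ‖x‖ := by gcongr; simpa using A.le_of_opNorm_le hA x
    _ = ‖x‖ ^ 2 := (sq _).symm

theorem IsPositive.norm_apply_sq_le_re_inner (hA : A.IsPositive) (h1 : ‖A‖ ≤ 1) (x : H) :
    ‖A x‖ ^ 2 ≤ (⟪A x, x⟫_ℂ).re := by
  have hcs := hA.norm_inner_mul_norm_inner_le x (A x)
  rw [hA.inner_left_eq_inner_right (A x) x, inner_self_eq_norm_sq_to_K, norm_pow,
    RCLike.norm_ofReal, abs_norm] at hcs
  have hnn : 0 ≤ (⟪A x, x⟫_ℂ).re := hA.re_inner_nonneg_left x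
  rcases (norm_nonneg (A x)).eq_or_lt with h0 | h0
  · rw [← h0]; simpa using hnn
  · refine le_of_mul_le_mul_right (hcs.trans ?_) (pow_pos h0 2)
    exact mul_le_mul_of_nonneg_left (re_inner_apply_self_le_norm_sq h1 (A x)) hnn

theorem IsPositive.norm_apply_sub_self_sq_le (hA : A.IsPositive) (h1 : ‖A‖ ≤ 1) (x : H) :
    ‖A x - x‖ ^ 2 ≤ ‖x‖ ^ 2 - (⟪A x, x⟫_ℂ).re := by
  have h := @norm_sub_sq ℂ H _ _ _ (A x) x
  rw [RCLike.re_to_complex] at h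
  linarith [hA.norm_apply_sq_le_re_inner h1 x]

theorem IsPositive.apply_eq_self_of_norm_sq_le (hA : A.IsPositive) (h1 : ‖A‖ ≤ 1) {x : H}
    (hx : ‖x‖ ^ 2 ≤ (⟪A x, x⟫_ℂ).re) : A x = x := by
  have h := hA.norm_apply_sub_self_sq_le h1 x
  rw [← sub_eq_zero, ← norm_eq_zero]
  nlinarith [norm_nonneg (A x - x)]

end ContinuousLinearMap

theorem tendsto_apply_of_tendsto_of_norm_le_one {𝕜 E α : Type*} [NontriviallyNormedField 𝕜]
    [SeminormedAddCommGroup E] [NormedSpace 𝕜 E] {T : ℕ → E →L[𝕜] E} (h1 : ∀ n, ‖T n‖ ≤ 1)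
    {η L : E} (hL : Tendsto (fun n => T n η) atTop (𝓝 L)) {l : Filter α} {k : α → ℕ}
    (hk : Tendsto k l atTop) {x : α → E} (hx : Tendsto x l (𝓝 η)) :
    Tendsto (fun j => T (k j) (x j)) l (𝓝 L) := by
  have hsub : Tendsto (fun j => T (k j) (x j) - T (k j) η) l (𝓝 0) := by
    refine squeeze_zero_norm (fun j => ?_) (tendsto_iff_norm_sub_tendsto_zero.1 hx)
    rw [← map_sub]
    simpa using (T (k j)).le_of_opNorm_le (h1 _) (x j - η)
  simpa using hsub.add (hL.comp hk)

theorem apply_eq_self_of_mapClusterPt {𝕜 E : Type*} [NontriviallyNormedField 𝕜]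
    [NormedAddCommGroup E] [NormedSpace 𝕜 E] {T : ℕ → E →L[𝕜] E} (h1 : ∀ n, ‖T n‖ ≤ 1)
    {Tlim : E → E} (hTlim : ∀ x, Tendsto (fun n => T n x) atTop (𝓝 (Tlim x)))
    {τ : ℕ → ℕ} (hτ : Tendsto τ atTop atTop) {u : ℕ → E} (hu : ∀ n, u (n + 1) = T (τ n) (u n))
    (hstep : Tendsto (fun n => ‖u (n + 1) - u n‖) atTop (𝓝 0)) {η : E}
    (hη : MapClusterPt η atTop u) : Tlim η = η := by
  obtain ⟨ψ, hψ, hlim⟩ := hη.tendsto_subseq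
  have hnext : Tendsto (fun j => u (ψ j + 1)) atTop (𝓝 η) := by
    have := (tendsto_zero_iff_norm_tendsto_zero.2 (hstep.comp hψ.tendsto_atTop)).add hlim
    simpa using this
  refine tendsto_nhds_unique ?_ hnext
  simp only [hu]
  exact tendsto_apply_of_tendsto_of_norm_le_one h1 (hTlim η) (hτ.comp hψ.tendsto_atTop) hlim

theorem eq_of_forall_inner_eq_of_orthogonal {𝕜 H : Type*} [RCLike 𝕜] [NormedAddCommGroup H]
    [InnerProductSpace 𝕜 H] {F : H →L[𝕜] H} {ξ p η : H} (hp : F p = p)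
    (hξp : ∀ ζ, F ζ = ζ → ⟪ξ - p, ζ⟫_𝕜 = 0) (hη : F η = η)
    (hηξ : ∀ ζ, F ζ = ζ → ⟪η, ζ⟫_𝕜 = ⟪ξ, ζ⟫_𝕜) : η = p := by
  have hfix : F (η - p) = η - p := by rw [map_sub, hη, hp]
  rw [← sub_eq_zero, ← inner_self_eq_zero (𝕜 := 𝕜), ← hξp _ hfix, inner_sub_left,
    inner_sub_left, hηξ _ hfix]

section Orbit

variable {H : Type*} [NormedAddCommGroup H] [InnerProductSpace ℂ H]

theorem tendsto_norm_succ_sub_of_isPositive {A : ℕ → H →L[ℂ] H} (hA : ∀ n, (A n).IsPositive)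
    (h1 : ∀ n, ‖A n‖ ≤ 1) {u : ℕ → H} (hu : ∀ n, u (n + 1) = A n (u n)) :
    Tendsto (fun n => ‖u (n + 1) - u n‖) atTop (𝓝 0) := by
  have hstep : ∀ n, ‖u (n + 1) - u n‖ ^ 2 ≤ ‖u n‖ ^ 2 - ‖u (n + 1)‖ ^ 2 := fun n => by
    rw [hu]
    linarith [(hA n).norm_apply_sub_self_sq_le (h1 n) (u n),
      (hA n).norm_apply_sq_le_re_inner (h1 n) (u n)]
  have hanti : Antitone fun n => ‖u n‖ ^ 2 :=
    antitone_nat_of_succ_le fun n => by linarith [hstep n, sq_nonneg ‖u (n + 1) - u n‖]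
  have hlim := tendsto_atTop_ciInf hanti ⟨0, by rintro _ ⟨n, rfl⟩; positivity⟩
  have hdiff : Tendsto (fun n => ‖u n‖ ^ 2 - ‖u (n + 1)‖ ^ 2) atTop (𝓝 0) := by
    simpa using hlim.sub (hlim.comp (tendsto_add_atTop_nat 1))
  refine squeeze_zero (fun n => norm_nonneg _) (fun n => ?_) (by simpa using hdiff.sqrt)
  exact Real.le_sqrt_of_sq_le (hstep n)

theorem apply_eq_self_of_tendsto_of_antitone {T : ℕ → H →L[ℂ] H} (hT : ∀ n, (T n).IsPositive)
    (h1 : ∀ n, ‖T n‖ ≤ 1) {ζ : H} (hdec : Antitone fun n => ⟪T n ζ, ζ⟫_ℂ)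
    (hζ : Tendsto (fun n => T n ζ) atTop (𝓝 ζ)) (k : ℕ) : T k ζ = ζ := by
  have hle : ⟪ζ, ζ⟫_ℂ ≤ ⟪T k ζ, ζ⟫_ℂ := hdec.le_of_tendsto (hζ.inner tendsto_const_nhds) k
  refine (hT k).apply_eq_self_of_norm_sq_le (h1 k) ?_
  rw [← inner_self_eq_norm_sq (𝕜 := ℂ)]
  exact (Complex.le_def.1 hle).1

theorem inner_prodSeq_apply_eq_of_forall_apply_eq_self {T : ℕ → H →L[ℂ] H}
    (hT : ∀ n, (T n : H →ₗ[ℂ] H).IsSymmetric) {ζ : H} (hζ : ∀ k, T k ζ = ζ) (σ : ℕ → ℕ) (x : H) :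
    ∀ n, ⟪prodSeq T σ n x, ζ⟫_ℂ = ⟪x, ζ⟫_ℂ := by
  have hinv : ∀ k y, ⟪T k y, ζ⟫_ℂ = ⟪y, ζ⟫_ℂ := fun k y =>
    (hT k y ζ).trans (congrArg (inner ℂ y) (hζ k))
  intro n
  induction n with
  | zero => exact hinv _ x
  | succ n ih => exact (hinv _ _).trans ih

end Orbit

open ContinuousLinearMap in
/-- If the orbit `{S_n^σ ξ}` is totally bounded, then `‖S_n^σ ξ - P ξ‖ → 0`. -/
theorem sigma_products_tendsto_of_totallyBounded
    {H : Type*} [NormedAddCommGroup H] [InnerProductSpace ℂ H] [CompleteSpace H]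
    (T : ℕ → H →L[ℂ] H)
    (hpos : ∀ n, ∀ ξ : H, 0 ≤ ⟪(T n) ξ, ξ⟫_ℂ)
    (hcontr : ∀ n, ‖T n‖ ≤ 1)
    (hdec : ∀ n, ∀ ξ : H, ⟪(T (n + 1)) ξ, ξ⟫_ℂ ≤ ⟪(T n) ξ, ξ⟫_ℂ)
    (Tlim : H →L[ℂ] H)
    (hTlim : ∀ ξ : H, Tendsto (fun n => (T n) ξ) atTop (𝓝 (Tlim ξ)))
    (P : H →L[ℂ] H)
    (hPmem : ∀ ξ : H, Tlim (P ξ) = P ξ)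
    (hPorth : ∀ ξ η : H, Tlim η = η → ⟪ξ - P ξ, η⟫_ℂ = 0)
    (σ : ℕ → ℕ) (hσ : ∀ k, (σ ⁻¹' {k}).Finite)
    (ξ : H) (htb : TotallyBounded (Set.range fun n => prodSeq T σ n ξ)) :
    Tendsto (fun n => ‖prodSeq T σ n ξ - P ξ‖) atTop (𝓝 0) := by
  have hT : ∀ n, (T n).IsPositive := fun n => isPositive_of_inner_nonneg (hpos n)
  have hσ_top : Tendsto σ atTop atTop := Nat.cofinite_eq_atTop ▸
    Tendsto.cofinite_of_finite_preimage_singleton fun k => (hσ k).to_subtype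
  set u : ℕ → H := fun n => prodSeq T σ n ξ
  have hu : ∀ n, u (n + 1) = T (σ (n + 1)) (u n) := fun n => rfl
  have hstep := tendsto_norm_succ_sub_of_isPositive (fun n => hT _) (fun n => hcontr _) hu
  have hinner : ∀ ζ, Tlim ζ = ζ → ∀ n, ⟪u n, ζ⟫_ℂ = ⟪ξ, ζ⟫_ℂ := fun ζ hζ =>
    inner_prodSeq_apply_eq_of_forall_apply_eq_self (fun n => (hT n).isSymmetric)
      (apply_eq_self_of_tendsto_of_antitone hT hcontr (antitone_nat_of_succ_le fun n => hdec n ζ)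
        (by simpa only [hζ] using hTlim ζ)) σ ξ
  have hcluster : ∀ η, MapClusterPt η atTop u → η = P ξ := by
    intro η hη
    obtain ⟨ψ, -, hψ⟩ := hη.tendsto_subseq
    refine eq_of_forall_inner_eq_of_orthogonal (hPmem ξ) (hPorth ξ)
      (apply_eq_self_of_mapClusterPt hcontr hTlim (hσ_top.comp (tendsto_add_atTop_nat 1)) hu
        hstep hη) fun ζ hζ => tendsto_nhds_unique (hψ.inner tendsto_const_nhds) ?_
    simpa only [Function.comp_def, hinner ζ hζ] using tendsto_const_nhds
  have hK : IsCompact (closure (Set.range u)) := htb.closure.isCompact_of_isClosed isClosed_closure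
  exact tendsto_iff_norm_sub_tendsto_zero.1 <| hK.tendsto_nhds_of_unique_mapClusterPt
    (Eventually.of_forall fun n => subset_closure (Set.mem_range_self n)) fun η _ => hcluster η
end

section
/- Let H be a complex Hilbert space, T_1 ≥ T_2 ≥ ⋯ a decreasing sequence of positive linear contractions on H, T the strong operator limit of (T_n), and P the orthogonal projection onto {ξ ∈ H : Tξ = ξ}. Let σ : ℕ → ℕ be proper and S_n^σ := T_{σ(n)} ⋯ T_{σ(1)}. Then the set H_σ := {ξ ∈ H : ‖S_n^σ ξ − P ξ‖ → 0} is a closed linear subspace of H containing the range of P, and for every ξ ∈ H one has ‖S_n^σ ξ − P ξ‖ → 0 if and only if ‖S_n^σ ξ‖ → ‖P ξ‖. -/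
/-!
Every `T_k` fixes each vector `η` fixed by the limit `T`: the numbers `Re ⟪T_k η, η⟫` decrease to
`‖η‖²`, so they are all at least `‖η‖²`, which for a contraction forces `T_k η = η`. Hence each
`S_n^σ` fixes `P ξ`, and since the `T_k` are self-adjoint, `⟪S_n^σ ξ - P ξ, P ξ⟫ = ⟪ξ - P ξ, P ξ⟫ = 0`.
Pythagoras then gives `‖S_n^σ ξ‖² = ‖P ξ‖² + ‖S_n^σ ξ - P ξ‖²`, which is the norm criterion. The
convergence set is a subspace by linearity, and closed because the `S_n^σ` are contractions.
-/

open Filter Topology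
open scoped InnerProductSpace ComplexOrder

section InnerProductSpace

variable {𝕜 E : Type*} [RCLike 𝕜] [NormedAddCommGroup E] [InnerProductSpace 𝕜 E]

lemma eq_of_norm_le_of_sq_norm_le_re_inner {x y : E} (hy : ‖y‖ ≤ ‖x‖)
    (h : ‖x‖ ^ 2 ≤ RCLike.re ⟪y, x⟫_𝕜) : y = x := by
  have hsq : ‖y - x‖ ^ 2 ≤ 0 := by
    rw [norm_sub_sq (𝕜 := 𝕜)]
    nlinarith [norm_nonneg y]
  rw [← sub_eq_zero, ← norm_eq_zero, ← sq_eq_zero_iff]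
  exact le_antisymm hsq (sq_nonneg _)

lemma apply_eq_self_of_antitone_of_tendsto {T : ℕ → E →L[𝕜] E} (hT : ∀ n, ‖T n‖ ≤ 1) {η : E}
    (hanti : Antitone fun n => RCLike.re ⟪T n η, η⟫_𝕜)
    (hlim : Tendsto (fun n => T n η) atTop (𝓝 η)) (n : ℕ) : T n η = η := by
  have hre : Tendsto (fun n => RCLike.re ⟪T n η, η⟫_𝕜) atTop (𝓝 (‖η‖ ^ 2)) := by
    rw [← inner_self_eq_norm_sq (𝕜 := 𝕜)]
    exact (RCLike.continuous_re.tendsto _).comp (hlim.inner tendsto_const_nhds)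
  refine eq_of_norm_le_of_sq_norm_le_re_inner ?_ (hanti.le_of_tendsto hre n)
  simpa using (T n).le_of_opNorm_le (hT n) η

lemma norm_sq_eq_add_of_inner_sub_eq_zero {x p : E} (h : ⟪x - p, p⟫_𝕜 = 0) :
    ‖x‖ ^ 2 = ‖p‖ ^ 2 + ‖x - p‖ ^ 2 := by
  have := norm_add_sq_eq_norm_sq_add_norm_sq_of_inner_eq_zero p (x - p) (inner_eq_zero_symm.mp h)
  rw [add_sub_cancel] at this
  simpa only [sq] using this

lemma tendsto_iff_tendsto_norm_of_inner_sub_eq_zero {ι : Type*} {l : Filter ι} {x : ι → E} {p : E}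
    (h : ∀ i, ⟪x i - p, p⟫_𝕜 = 0) : Tendsto x l (𝓝 p) ↔ Tendsto (‖x ·‖) l (𝓝 ‖p‖) := by
  refine ⟨Tendsto.norm, fun hnorm => tendsto_iff_norm_sub_tendsto_zero.mpr ?_⟩
  have hcont : Continuous fun t : ℝ => √(t ^ 2 - ‖p‖ ^ 2) := by fun_prop
  convert (hcont.tendsto ‖p‖).comp hnorm using 2 with i
  · simp [norm_sq_eq_add_of_inner_sub_eq_zero (h i)]
  · simp

end InnerProductSpace

lemma ContinuousLinearMap.isSymmetric_of_inner_nonneg {H : Type*} [NormedAddCommGroup H]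
    [InnerProductSpace ℂ H] {A : H →L[ℂ] H} (hA : ∀ x, 0 ≤ ⟪A x, x⟫_ℂ) :
    (A : H →ₗ[ℂ] H).IsSymmetric :=
  ((isPositive_iff_complex A).mpr fun x =>
    ⟨(Complex.eq_re_of_ofReal_le (hA x)).symm, (Complex.le_def.mp (hA x)).1⟩).isSymmetric

def tendstoSubmodule {ι R M N : Type*} [Semiring R] [AddCommMonoid M] [Module R M]
    [AddCommMonoid N] [Module R N] [TopologicalSpace N] [ContinuousAdd N]
    [ContinuousConstSMul R N] (S : ι → M →ₗ[R] N) (P : M →ₗ[R] N) (l : Filter ι) :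
    Submodule R M where
  carrier := {x | Tendsto (fun i => S i x) l (𝓝 (P x))}
  add_mem' ha hb := by simpa only [Set.mem_ofPred_eq, map_add] using ha.add hb
  zero_mem' := by simpa only [Set.mem_ofPred_eq, map_zero] using tendsto_const_nhds
  smul_mem' c _ hx := by simpa only [Set.mem_ofPred_eq, map_smul] using hx.const_smul c

lemma isClosed_setOfPred_tendsto_of_norm_le {ι 𝕜 E F : Type*} [NontriviallyNormedField 𝕜]
    [NormedAddCommGroup E] [NormedSpace 𝕜 E] [NormedAddCommGroup F] [NormedSpace 𝕜 F]
    {S : ι → E →L[𝕜] F} {C : ℝ} (hS : ∀ i, ‖S i‖ ≤ C) {f : E → F} (hf : Continuous f)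
    (l : Filter ι) : IsClosed {x | Tendsto (fun i => S i x) l (𝓝 (f x))} := by
  have hequi := (NormedSpace.equicontinuous_TFAE S).out 5 1
  exact (hequi.mp ⟨C, hS⟩).isClosed_setOfPred_tendsto hf

section prodSeq

variable {H : Type*} [NormedAddCommGroup H] [InnerProductSpace ℂ H]
  {T : ℕ → H →L[ℂ] H} {σ : ℕ → ℕ}

lemma norm_prodSeq_le_one (hT : ∀ k, ‖T k‖ ≤ 1) (n : ℕ) : ‖prodSeq T σ n‖ ≤ 1 := by
  induction n with
  | zero => exact hT _
  | succ n ih =>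
    exact (ContinuousLinearMap.opNorm_comp_le _ _).trans
      (mul_le_one₀ (hT _) (norm_nonneg _) ih)

lemma prodSeq_apply_of_forall_apply_eq {η : H} (hη : ∀ k, T k η = η) (n : ℕ) :
    prodSeq T σ n η = η := by
  induction n with
  | zero => exact hη _
  | succ n ih => simp only [prodSeq, ContinuousLinearMap.comp_apply, ih, hη]

lemma inner_prodSeq_apply_of_forall_apply_eq (hT : ∀ k, (T k : H →ₗ[ℂ] H).IsSymmetric)
    {η : H} (hη : ∀ k, T k η = η) (n : ℕ) (x : H) :
    ⟪prodSeq T σ n x, η⟫_ℂ = ⟪x, η⟫_ℂ := by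
  induction n with
  | zero => rw [prodSeq, ← ContinuousLinearMap.coe_coe, hT, ContinuousLinearMap.coe_coe, hη]
  | succ n ih =>
    rw [prodSeq, ContinuousLinearMap.comp_apply, ← ContinuousLinearMap.coe_coe, hT,
      ContinuousLinearMap.coe_coe, hη, ih]

end prodSeq

theorem sigma_paszkiewicz_subspace_general
    {H : Type*} [NormedAddCommGroup H] [InnerProductSpace ℂ H]
    (T : ℕ → H →L[ℂ] H)
    (hpos : ∀ n, ∀ ξ : H, 0 ≤ ⟪(T n) ξ, ξ⟫_ℂ)
    (hcontr : ∀ n, ‖T n‖ ≤ 1)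
    (hdec : ∀ n, ∀ ξ : H, ⟪(T (n + 1)) ξ, ξ⟫_ℂ ≤ ⟪(T n) ξ, ξ⟫_ℂ)
    (Tlim : H →L[ℂ] H)
    (hTlim : ∀ ξ : H, Tendsto (fun n => (T n) ξ) atTop (𝓝 (Tlim ξ)))
    (P : H →L[ℂ] H)
    (hPmem : ∀ ξ : H, Tlim (P ξ) = P ξ)
    (hPorth : ∀ ξ η : H, Tlim η = η → ⟪ξ - P ξ, η⟫_ℂ = 0)
    (σ : ℕ → ℕ) :
    (∃ K : Submodule ℂ H,
      (K : Set H) = {ξ : H | Tendsto (fun n => prodSeq T σ n ξ) atTop (𝓝 (P ξ))}) ∧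
    IsClosed {ξ : H | Tendsto (fun n => prodSeq T σ n ξ) atTop (𝓝 (P ξ))} ∧
    (∀ ξ : H, P ξ ∈ {ξ : H | Tendsto (fun n => prodSeq T σ n ξ) atTop (𝓝 (P ξ))}) ∧
    (∀ ξ : H, Tendsto (fun n => prodSeq T σ n ξ) atTop (𝓝 (P ξ)) ↔
      Tendsto (fun n => ‖prodSeq T σ n ξ‖) atTop (𝓝 ‖P ξ‖)) := by
  have hfix : ∀ ξ k, T k (P ξ) = P ξ := fun ξ =>
    apply_eq_self_of_antitone_of_tendsto (𝕜 := ℂ) hcontr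
      (antitone_nat_of_succ_le fun n => (Complex.le_def.mp (hdec n _)).1)
      (by simpa only [hPmem] using hTlim (P ξ))
  have hPidem : ∀ ξ, P (P ξ) = P ξ := fun ξ => by
    have h := hPorth (P ξ) (P ξ - P (P ξ)) (by rw [map_sub, hPmem, hPmem])
    exact (sub_eq_zero.mp (inner_self_eq_zero.mp h)).symm
  refine ⟨⟨tendstoSubmodule (fun n => (prodSeq T σ n : H →ₗ[ℂ] H)) (P : H →ₗ[ℂ] H) atTop, rfl⟩,
    isClosed_setOfPred_tendsto_of_norm_le (norm_prodSeq_le_one hcontr) P.continuous atTop,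
    fun ξ => ?_, fun ξ => tendsto_iff_tendsto_norm_of_inner_sub_eq_zero (𝕜 := ℂ) fun n => ?_⟩
  · simp only [Set.mem_ofPred_eq, prodSeq_apply_of_forall_apply_eq (hfix ξ), hPidem]
    exact tendsto_const_nhds
  · rw [inner_sub_left, inner_prodSeq_apply_of_forall_apply_eq
      (fun k => ContinuousLinearMap.isSymmetric_of_inner_nonneg (hpos k)) (hfix ξ),
      ← inner_sub_left]
    exact hPorth ξ _ (hPmem ξ)

/-- The σ-Paszkiewicz set `H_σ = {ξ | S_n^σ ξ → P ξ}` is a closed linear subspace containing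
the range of `P`, and `S_n^σ ξ → P ξ` iff `‖S_n^σ ξ‖ → ‖P ξ‖`. -/
theorem sigma_paszkiewicz_subspace
    {H : Type*} [NormedAddCommGroup H] [InnerProductSpace ℂ H] [CompleteSpace H]
    (T : ℕ → H →L[ℂ] H)
    (hpos : ∀ n, ∀ ξ : H, 0 ≤ ⟪(T n) ξ, ξ⟫_ℂ)
    (hcontr : ∀ n, ‖T n‖ ≤ 1)
    (hdec : ∀ n, ∀ ξ : H, ⟪(T (n + 1)) ξ, ξ⟫_ℂ ≤ ⟪(T n) ξ, ξ⟫_ℂ)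
    (Tlim : H →L[ℂ] H)
    (hTlim : ∀ ξ : H, Tendsto (fun n => (T n) ξ) atTop (𝓝 (Tlim ξ)))
    (P : H →L[ℂ] H)
    (hPmem : ∀ ξ : H, Tlim (P ξ) = P ξ)
    (hPorth : ∀ ξ η : H, Tlim η = η → ⟪ξ - P ξ, η⟫_ℂ = 0)
    (σ : ℕ → ℕ) (hσ : ∀ k, (σ ⁻¹' {k}).Finite) :
    (∃ K : Submodule ℂ H,
      (K : Set H) = {ξ : H | Tendsto (fun n => prodSeq T σ n ξ) atTop (𝓝 (P ξ))}) ∧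
    IsClosed {ξ : H | Tendsto (fun n => prodSeq T σ n ξ) atTop (𝓝 (P ξ))} ∧
    (∀ ξ : H, P ξ ∈ {ξ : H | Tendsto (fun n => prodSeq T σ n ξ) atTop (𝓝 (P ξ))}) ∧
    (∀ ξ : H, Tendsto (fun n => prodSeq T σ n ξ) atTop (𝓝 (P ξ)) ↔
      Tendsto (fun n => ‖prodSeq T σ n ξ‖) atTop (𝓝 ‖P ξ‖)) :=
  sigma_paszkiewicz_subspace_general T hpos hcontr hdec Tlim hTlim P hPmem hPorth σ
end

section
/- Let H be a complex Hilbert space, T_1 ≥ T_2 ≥ ⋯ a decreasing sequence of positive linear contractions on H, T the strong operator limit of (T_n), and P the orthogonal projection onto {ξ ∈ H : Tξ = ξ}. Assume the sequence has uniform spectral gap at 1, i.e., there exist δ ∈ (0, 1) and N ∈ ℕ such that the spectrum of T_n does not intersect the open interval (1−δ, 1) for every n ≥ N. Then for every proper σ : ℕ → ℕ and every ξ ∈ H, ‖T_{σ(n)} ⋯ T_{σ(1)} ξ − P ξ‖ → 0. -/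
/-!
Let `F m` be the subspace of vectors fixed by `T m`. Comparing quadratic forms, the `F m` decrease,
so every `T k` with `k ≤ m` fixes `F m` and, being self-adjoint, commutes with the projection onto
it. By the spectral gap, `T m` (for `m ≥ N`) contracts `(F m)ᗮ` by the factor `1 - δ`; hence
applying `T m` lowers the squared norm by at least a fixed multiple of the squared distance of the
result to `F m`.

Since every `T k` fixes `P ξ`, it suffices to show that `Z n = prodSeq T σ n (ξ - P ξ)` tends
to `0`. The norms `‖Z n‖` decrease, so their squared decrements tend to `0`. At a record time `n`,
where `m = σ n ≥ σ j` for all `j ≤ n`, the projection of `Z n` onto `F m` equals that of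
`ξ - P ξ`, which is small for large `m` because `ξ - P ξ ⊥ ⋂ F m`; and the distance of `Z n` to
`F m` is controlled by the last decrement. As `σ` is proper, such record times occur arbitrarily
late with arbitrarily large `σ n`, so `‖Z n‖` becomes arbitrarily small.
-/

open Filter Topology
open scoped InnerProductSpace ComplexOrder

open RCLike

theorem tendsto_atTop_atTop_of_finite_preimage_singleton {σ : ℕ → ℕ}
    (hσ : ∀ k, (σ ⁻¹' {k}).Finite) : Tendsto σ atTop atTop := by
  simpa [Nat.cofinite_eq_atTop] using
    Tendsto.cofinite_of_finite_preimage_singleton fun k ↦ (hσ k).to_subtype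

theorem exists_record_of_tendsto_atTop {σ : ℕ → ℕ} (hσ : Tendsto σ atTop atTop) (K B : ℕ) :
    ∃ n, K ≤ n ∧ B ≤ σ (n + 1) ∧ ∀ j ≤ n + 1, σ j ≤ σ (n + 1) := by
  set b := max B ((Finset.range (K + 1)).sup σ)
  have hex : ∃ n, b < σ n := (hσ.eventually_gt_atTop b).exists
  have hb : ∀ j ≤ K, σ j ≤ b := fun j hj ↦
    le_max_of_le_right (Finset.le_sup (Finset.mem_range.mpr (Nat.lt_succ_of_le hj)))
  have hK : K < Nat.find hex := by
    by_contra! h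
    exact (Nat.find_spec hex).not_ge (hb _ h)
  obtain ⟨n, hn⟩ := Nat.exists_eq_add_one_of_ne_zero (Nat.ne_zero_of_lt hK)
  have hrec : b < σ (n + 1) := hn ▸ Nat.find_spec hex
  refine ⟨n, by omega, (le_max_left _ _).trans hrec.le, fun j hj ↦ ?_⟩
  rcases hj.lt_or_eq with hj | rfl
  · exact (not_lt.mp (Nat.find_min hex (hn ▸ hj))).trans hrec.le
  · rfl

theorem Antitone.tendsto_sub_succ_zero {u : ℕ → ℝ} (hu : Antitone u)
    (hb : BddBelow (Set.range u)) : Tendsto (fun n ↦ u n - u (n + 1)) atTop (𝓝 0) := by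
  have h := tendsto_atTop_ciInf hu hb
  simpa using h.sub (h.comp (tendsto_add_atTop_nat 1))

theorem Submodule.tendsto_starProjection_zero_of_antitone {𝕜 E ι : Type*} [RCLike 𝕜]
    [NormedAddCommGroup E] [InnerProductSpace 𝕜 E] [CompleteSpace E] [Preorder ι]
    (K : ι → Submodule 𝕜 E) [∀ i, (K i).HasOrthogonalProjection] (hK : Antitone K) {x : E}
    (hx : x ∈ (⨅ i, K i)ᗮ) : Tendsto (fun i ↦ (K i).starProjection x) atTop (𝓝 0) := by
  have hclosure : (⨆ i, (K i)ᗮ).topologicalClosure = (⨅ i, K i)ᗮ := by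
    rw [← orthogonal_orthogonal_eq_closure, ← iInf_orthogonal]
    simp only [orthogonal_orthogonal]
  have h := starProjection_tendsto_closure_iSup (fun i ↦ (K i)ᗮ)
    (fun i j hij ↦ orthogonal_le (hK hij)) x
  simp only [hclosure, starProjection_orthogonal_val, starProjection_eq_self_iff.mpr hx] at h
  simpa using h.const_sub x

theorem IsSelfAdjoint.exists_mul_self_le_of_spectral_gap {𝒜 : Type*} [CStarAlgebra 𝒜]
    [PartialOrder 𝒜] [StarOrderedRing 𝒜] {a : 𝒜} (ha : IsSelfAdjoint a) {r : ℝ} (hr : r < 1)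
    (hspec : ∀ x ∈ spectrum ℝ a, |x| ≤ r ∨ x = 1) :
    ∃ q : 𝒜, a * q = q ∧ a * a ≤ algebraMap ℝ 𝒜 (r ^ 2) + (1 - r ^ 2) • q := by
  -- `g` vanishes on `[-r, r]` and `g 1 = 1`, so `g(a)` is the spectral projection onto `1`.
  set g : ℝ → ℝ := fun x ↦ max 0 ((x - r) / (1 - r))
  have hg : ∀ x ∈ spectrum ℝ a, x * g x = g x ∧ x * x ≤ r ^ 2 + (1 - r ^ 2) * g x := by
    intro x hx
    have hr₁ : 0 < 1 - r := sub_pos.mpr hr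
    rcases hspec x hx with hx | rfl
    · have hgx : g x = 0 :=
        max_eq_left (div_nonpos_of_nonpos_of_nonneg (by linarith [le_abs_self x]) hr₁.le)
      simp only [hgx, mul_zero, add_zero, true_and]
      nlinarith [abs_mul_abs_self x, abs_nonneg x]
    · have hg₁ : g 1 = 1 := by simp [g, div_self hr₁.ne']
      simp [hg₁]
  refine ⟨cfc g a, ?_, ?_⟩
  · calc a * cfc g a = cfc (fun x ↦ x * g x) a := by rw [cfc_mul (fun x ↦ x) g a, cfc_id' ℝ a]
      _ = cfc g a := cfc_congr fun x hx ↦ (hg x hx).1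
  · calc a * a = cfc (fun x ↦ x * x) a := by rw [cfc_mul (fun x ↦ x) (fun x ↦ x) a, cfc_id' ℝ a]
      _ ≤ cfc (fun x ↦ r ^ 2 + (1 - r ^ 2) * g x) a := cfc_mono fun x hx ↦ (hg x hx).2
      _ = algebraMap ℝ 𝒜 (r ^ 2) + (1 - r ^ 2) • cfc g a := by
        rw [cfc_const_add (r ^ 2) (fun x ↦ (1 - r ^ 2) * g x) a, cfc_const_mul (1 - r ^ 2) g a]

namespace ContinuousLinearMap

variable {𝕜 E : Type*} [RCLike 𝕜] [NormedAddCommGroup E] [InnerProductSpace 𝕜 E]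

def fixedSubspace (A : E →L[𝕜] E) : Submodule 𝕜 E := (A - 1).ker

@[simp]
theorem mem_fixedSubspace {A : E →L[𝕜] E} {x : E} : x ∈ A.fixedSubspace ↔ A x = x := by
  simp [fixedSubspace, sub_eq_zero]

instance [CompleteSpace E] (A : E →L[𝕜] E) : A.fixedSubspace.HasOrthogonalProjection := by
  unfold fixedSubspace
  infer_instance

theorem apply_eq_self_of_sq_norm_le_re_inner {A : E →L[𝕜] E} (hA : ‖A‖ ≤ 1) {x : E}
    (h : ‖x‖ ^ 2 ≤ re ⟪A x, x⟫_𝕜) : A x = x := by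
  have hAx : ‖A x‖ ≤ ‖x‖ := (A.le_of_opNorm_le hA x).trans_eq (one_mul _)
  have : ‖A x - x‖ ^ 2 ≤ 0 := by
    rw [@norm_sub_sq 𝕜]
    nlinarith [norm_nonneg (A x), norm_nonneg x]
  exact sub_eq_zero.mp (norm_eq_zero.mp ((sq_nonpos_iff _).mp this))

theorem re_inner_le_re_inner_of_le {B C : E →L[𝕜] E} (h : B ≤ C) (x : E) :
    re ⟪B x, x⟫_𝕜 ≤ re ⟪C x, x⟫_𝕜 := by
  have := ((le_def B C).mp h).re_inner_nonneg_left x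
  rwa [sub_apply, inner_sub_left, map_sub, sub_nonneg] at this

section Hilbert

variable [CompleteSpace E] {A : E →L[𝕜] E} {K : Submodule 𝕜 E}

theorem _root_.IsSelfAdjoint.apply_mem_orthogonal_of_le_fixedSubspace (hA : IsSelfAdjoint A)
    (hK : K ≤ A.fixedSubspace) {u : E} (hu : u ∈ Kᗮ) : A u ∈ Kᗮ := by
  intro k hk
  rw [← hA.adjoint_eq, adjoint_inner_right, mem_fixedSubspace.mp (hK hk)]
  exact hu k hk

theorem starProjection_apply_of_le_fixedSubspace [K.HasOrthogonalProjection]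
    (hA : IsSelfAdjoint A) (hK : K ≤ A.fixedSubspace) (y : E) :
    K.starProjection (A y) = K.starProjection y := by
  refine K.eq_starProjection_of_mem_orthogonal' (K.starProjection_apply_mem y)
    (hA.apply_mem_orthogonal_of_le_fixedSubspace hK (K.sub_starProjection_mem_orthogonal y)) ?_
  rw [map_sub, mem_fixedSubspace.mp (hK (K.starProjection_apply_mem y)), add_sub_cancel]

end Hilbert

section Decreasing

variable {T : ℕ → E →L[𝕜] E} (hT : ∀ n, ‖T n‖ ≤ 1) (hmono : Antitone T)
include hT hmono

theorem fixedSubspace_antitone : Antitone fun n ↦ (T n).fixedSubspace := by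
  intro k m hkm x hx
  refine mem_fixedSubspace.mpr (apply_eq_self_of_sq_norm_le_re_inner (hT k) ?_)
  calc ‖x‖ ^ 2 = re ⟪T m x, x⟫_𝕜 := by rw [mem_fixedSubspace.mp hx, inner_self_eq_norm_sq]
    _ ≤ re ⟪T k x, x⟫_𝕜 := re_inner_le_re_inner_of_le (hmono hkm) x

theorem fixedSubspace_le_of_tendsto {L : E →L[𝕜] E}
    (hL : ∀ x, Tendsto (fun n ↦ T n x) atTop (𝓝 (L x))) (k : ℕ) :
    L.fixedSubspace ≤ (T k).fixedSubspace := by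
  intro x hx
  refine mem_fixedSubspace.mpr (apply_eq_self_of_sq_norm_le_re_inner (hT k) ?_)
  have hlim : Tendsto (fun n ↦ re ⟪T n x, x⟫_𝕜) atTop (𝓝 (re ⟪L x, x⟫_𝕜)) :=
    (continuous_re.tendsto _).comp ((hL x).inner tendsto_const_nhds)
  calc ‖x‖ ^ 2 = re ⟪L x, x⟫_𝕜 := by rw [mem_fixedSubspace.mp hx, inner_self_eq_norm_sq]
    _ ≤ re ⟪T k x, x⟫_𝕜 := le_of_tendsto hlim
      (eventually_atTop.mpr ⟨k, fun n hn ↦ re_inner_le_re_inner_of_le (hmono hn) x⟩)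

end Decreasing

theorem iInf_fixedSubspace_le_of_tendsto {T : ℕ → E →L[𝕜] E} {L : E →L[𝕜] E}
    (hL : ∀ x, Tendsto (fun n ↦ T n x) atTop (𝓝 (L x))) :
    ⨅ n, (T n).fixedSubspace ≤ L.fixedSubspace := by
  intro x hx
  have hfix : ∀ n, T n x = x := fun n ↦ mem_fixedSubspace.mp (Submodule.mem_iInf _ |>.mp hx n)
  exact mem_fixedSubspace.mpr (tendsto_nhds_unique (hL x) (by simp [hfix]))

end ContinuousLinearMap

section ComplexHilbert

variable {H : Type*} [NormedAddCommGroup H] [InnerProductSpace ℂ H]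

theorem ContinuousLinearMap.isPositive_of_inner_nonneg_s17 {A : H →L[ℂ] H}
    (h : ∀ x, 0 ≤ ⟪A x, x⟫_ℂ) : A.IsPositive :=
  (isPositive_iff A).mpr ⟨(LinearMap.isSymmetric_iff_inner_map_self_real _).mpr fun x ↦
    Complex.conj_eq_iff_im.mpr (Complex.nonneg_iff.mp (h x)).2.symm, h⟩

variable [CompleteSpace H] {A : H →L[ℂ] H} {r : ℝ}

theorem ContinuousLinearMap.IsPositive.abs_le_or_eq_one_of_mem_spectrum (hA : A.IsPositive)
    (hA₁ : ‖A‖ ≤ 1) (hgap : ∀ x ∈ Set.Ioo r 1, (x : ℂ) ∉ spectrum ℂ A) {x : ℝ}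
    (hx : x ∈ spectrum ℝ A) : |x| ≤ r ∨ x = 1 := by
  have h₀ : 0 ≤ x := spectrum_nonneg_of_nonneg ((nonneg_iff_isPositive A).mpr hA) hx
  have h₁ : x ≤ 1 := by
    have := (spectrum.norm_le_norm_mul_of_mem hx).trans
      (mul_le_one₀ hA₁ (norm_nonneg _) norm_id_le)
    rwa [Real.norm_of_nonneg h₀] at this
  rw [abs_of_nonneg h₀]
  by_contra! h
  exact hgap x ⟨h.1, h₁.lt_of_ne h.2⟩ (by simpa using spectrum.algebraMap_mem ℂ hx)

open ContinuousLinearMap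

theorem IsSelfAdjoint.sq_norm_apply_le_of_mem_orthogonal_fixedSubspace (hA : IsSelfAdjoint A)
    (hr : r < 1) (hspec : ∀ x ∈ spectrum ℝ A, |x| ≤ r ∨ x = 1) {u : H}
    (hu : u ∈ A.fixedSubspaceᗮ) : ‖A u‖ ^ 2 ≤ r ^ 2 * ‖u‖ ^ 2 := by
  obtain ⟨Q, hAQ, hle⟩ := hA.exists_mul_self_le_of_spectral_gap hr hspec
  have hQu : ⟪Q u, u⟫_ℂ = 0 := Submodule.inner_right_of_mem_orthogonal
    (mem_fixedSubspace.mpr (by rw [← mul_apply_eq_comp, hAQ])) hu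
  have hAA : re ⟪(A * A) u, u⟫_ℂ = ‖A u‖ ^ 2 := by
    rw [mul_apply_eq_comp, ← adjoint_inner_right, hA.adjoint_eq, inner_self_eq_norm_sq]
  have hRHS : re ⟪(algebraMap ℝ (H →L[ℂ] H) (r ^ 2) + (1 - r ^ 2) • Q) u, u⟫_ℂ =
      r ^ 2 * ‖u‖ ^ 2 := by
    simp [Algebra.algebraMap_eq_smul_one, hQu, ← Complex.ofReal_pow]
  simpa only [hAA, hRHS] using re_inner_le_re_inner_of_le hle u

theorem IsSelfAdjoint.sq_norm_sub_starProjection_fixedSubspace_le (hA : IsSelfAdjoint A)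
    (hr : |r| < 1) (hspec : ∀ x ∈ spectrum ℝ A, |x| ≤ r ∨ x = 1) (z : H) :
    (1 - r ^ 2) * ‖A z - A.fixedSubspace.starProjection (A z)‖ ^ 2 ≤ ‖z‖ ^ 2 - ‖A z‖ ^ 2 := by
  set K := A.fixedSubspace
  set u := z - K.starProjection z
  have hu : u ∈ Kᗮ := K.sub_starProjection_mem_orthogonal z
  have hAu : A u ∈ Kᗮ := hA.apply_mem_orthogonal_of_le_fixedSubspace le_rfl hu
  have hPz : A (K.starProjection z) = K.starProjection z :=
    mem_fixedSubspace.mp (K.starProjection_apply_mem z)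
  have hAz : A z = K.starProjection z + A u := by rw [map_sub, hPz, add_sub_cancel]
  have hpyth : ∀ v ∈ Kᗮ, ‖K.starProjection z + v‖ ^ 2 = ‖K.starProjection z‖ ^ 2 + ‖v‖ ^ 2 :=
    fun v hv ↦ by
      simpa only [sq] using norm_add_sq_eq_norm_sq_add_norm_sq_of_inner_eq_zero _ _
        (Submodule.inner_right_of_mem_orthogonal (K.starProjection_apply_mem z) hv)
  have hz := hpyth u hu
  rw [add_sub_cancel] at hz
  rw [starProjection_apply_of_le_fixedSubspace hA le_rfl, hAz, add_sub_cancel_left, hz, hpyth _ hAu]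
  have hgap := hA.sq_norm_apply_le_of_mem_orthogonal_fixedSubspace
    ((le_abs_self r).trans_lt hr) hspec hu
  have hr₂ : r ^ 2 < 1 := sq_lt_one_iff_abs_lt_one r |>.mpr hr
  -- the goal is equivalent to `(2 - r ^ 2) * ‖A u‖ ^ 2 ≤ ‖u‖ ^ 2`, and `(2 - r ^ 2) * r ^ 2 ≤ 1`
  nlinarith [mul_le_mul_of_nonneg_left hgap (by linarith : (0 : ℝ) ≤ 2 - r ^ 2),
    mul_nonneg (sq_nonneg (1 - r ^ 2)) (sq_nonneg ‖u‖)]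

end ComplexHilbert

section ProdSeq

open ContinuousLinearMap

variable {H : Type*} [NormedAddCommGroup H] [InnerProductSpace ℂ H] {T : ℕ → H →L[ℂ] H}
  {σ : ℕ → ℕ}

theorem prodSeq_succ_apply (n : ℕ) (x : H) :
    prodSeq T σ (n + 1) x = T (σ (n + 1)) (prodSeq T σ n x) :=
  rfl

theorem prodSeq_apply_of_forall_apply_eq_self {p : H} (hp : ∀ k, T k p = p) (n : ℕ) :
    prodSeq T σ n p = p := by
  induction n with
  | zero => exact hp _
  | succ n ih => rw [prodSeq_succ_apply, ih, hp]

theorem norm_prodSeq_succ_apply_le (hT : ∀ k, ‖T k‖ ≤ 1) (n : ℕ) (x : H) :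
    ‖prodSeq T σ (n + 1) x‖ ≤ ‖prodSeq T σ n x‖ :=
  ((T _).le_of_opNorm_le (hT _) _).trans_eq (one_mul _)

variable [CompleteSpace H]

theorem starProjection_prodSeq_apply {K : Submodule ℂ H} [K.HasOrthogonalProjection]
    (hT : ∀ k, IsSelfAdjoint (T k)) {n : ℕ} (hK : ∀ j ≤ n, K ≤ (T (σ j)).fixedSubspace)
    (x : H) : K.starProjection (prodSeq T σ n x) = K.starProjection x := by
  induction n with
  | zero => exact starProjection_apply_of_le_fixedSubspace (hT _) (hK 0 le_rfl) x
  | succ n ih =>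
    rw [prodSeq_succ_apply, starProjection_apply_of_le_fixedSubspace (hT _) (hK _ le_rfl),
      ih fun j hj ↦ hK j (hj.trans n.le_succ)]

theorem tendsto_prodSeq_apply_zero_of_spectral_gap (hsa : ∀ k, IsSelfAdjoint (T k))
    (hT : ∀ k, ‖T k‖ ≤ 1) (hfix : Antitone fun k ↦ (T k).fixedSubspace) {r : ℝ} (hr : |r| < 1)
    {N : ℕ} (hgap : ∀ k ≥ N, ∀ x ∈ spectrum ℝ (T k), |x| ≤ r ∨ x = 1)
    (hσ : Tendsto σ atTop atTop) {η : H} (hη : η ∈ (⨅ k, (T k).fixedSubspace)ᗮ) :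
    Tendsto (fun n ↦ prodSeq T σ n η) atTop (𝓝 0) := by
  set Z := fun n ↦ prodSeq T σ n η
  have hZ : Antitone fun n ↦ ‖Z n‖ :=
    antitone_nat_of_succ_le fun n ↦ norm_prodSeq_succ_apply_le hT n η
  have hdrop : Tendsto (fun n ↦ ‖Z n‖ ^ 2 - ‖Z (n + 1)‖ ^ 2) atTop (𝓝 0) :=
    Antitone.tendsto_sub_succ_zero (fun m n h ↦ pow_le_pow_left₀ (norm_nonneg _) (hZ h) 2)
      ⟨0, by rintro _ ⟨n, rfl⟩; positivity⟩
  have hproj : Tendsto (fun k ↦ ‖(T k).fixedSubspace.starProjection η‖) atTop (𝓝 0) := by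
    simpa using (Submodule.tendsto_starProjection_zero_of_antitone _ hfix hη).norm
  suffices ∀ ε > 0, ∃ n, ‖Z n‖ < ε by
    refine Metric.tendsto_atTop.mpr fun ε hε ↦ ?_
    obtain ⟨n₀, hn₀⟩ := this ε hε
    exact ⟨n₀, fun n hn ↦ by simpa using (hZ hn).trans_lt hn₀⟩
  intro ε hε
  have hr₂ : 0 < 1 - r ^ 2 := by linarith [(sq_lt_one_iff_abs_lt_one r).mpr hr]
  obtain ⟨K, hK⟩ := eventually_atTop.mp
    (hdrop.eventually (gt_mem_nhds (by positivity : 0 < (1 - r ^ 2) * (ε / 2) ^ 2)))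
  obtain ⟨B, hB⟩ := eventually_atTop.mp (hproj.eventually (gt_mem_nhds (half_pos hε)))
  obtain ⟨n, hKn, hBn, hrec⟩ := exists_record_of_tendsto_atTop hσ K (max B N)
  set P := (T (σ (n + 1))).fixedSubspace.starProjection
  have hPZ : P (Z (n + 1)) = P η :=
    starProjection_prodSeq_apply hsa (fun j hj ↦ hfix (hrec j hj)) η
  have hdefect : ‖Z (n + 1) - P (Z (n + 1))‖ < ε / 2 := by
    have h := (hsa _).sq_norm_sub_starProjection_fixedSubspace_le hr
      (hgap _ (le_of_max_le_right hBn)) (Z n)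
    exact lt_of_pow_lt_pow_left₀ 2 (by positivity)
      (lt_of_mul_lt_mul_left (h.trans_lt (hK n hKn)) hr₂.le)
  refine ⟨n + 1, ?_⟩
  calc ‖Z (n + 1)‖ ≤ ‖P (Z (n + 1))‖ + ‖Z (n + 1) - P (Z (n + 1))‖ :=
        norm_le_norm_add_norm_sub' _ _
    _ < ε / 2 + ε / 2 := add_lt_add (hPZ ▸ hB _ (le_of_max_le_left hBn)) hdefect
    _ = ε := add_halves ε

end ProdSeq

open ContinuousLinearMap in
/-- A decreasing sequence of positive contractions with uniform spectral gap at `1`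
satisfies the generalized Paszkiewicz conjecture: `S_n^σ ξ → P ξ` for every proper `σ`. -/
theorem generalized_paszkiewicz_of_uniform_spectral_gap
    {H : Type*} [NormedAddCommGroup H] [InnerProductSpace ℂ H] [CompleteSpace H]
    (T : ℕ → H →L[ℂ] H)
    (hpos : ∀ n, ∀ ξ : H, 0 ≤ ⟪(T n) ξ, ξ⟫_ℂ)
    (hcontr : ∀ n, ‖T n‖ ≤ 1)
    (hdec : ∀ n, ∀ ξ : H, ⟪(T (n + 1)) ξ, ξ⟫_ℂ ≤ ⟪(T n) ξ, ξ⟫_ℂ)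
    (Tlim : H →L[ℂ] H)
    (hTlim : ∀ ξ : H, Tendsto (fun n => (T n) ξ) atTop (𝓝 (Tlim ξ)))
    (P : H →L[ℂ] H)
    (hPmem : ∀ ξ : H, Tlim (P ξ) = P ξ)
    (hPorth : ∀ ξ η : H, Tlim η = η → ⟪ξ - P ξ, η⟫_ℂ = 0)
    (hgap : ∃ δ ∈ Set.Ioo (0 : ℝ) 1, ∃ N : ℕ, ∀ n ≥ N,
      ∀ x : ℝ, x ∈ Set.Ioo (1 - δ) 1 → (x : ℂ) ∉ spectrum ℂ (T n)) :
    ∀ σ : ℕ → ℕ, (∀ k, (σ ⁻¹' {k}).Finite) →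
      ∀ ξ : H, Tendsto (fun n => prodSeq T σ n ξ) atTop (𝓝 (P ξ)) := by
  obtain ⟨δ, ⟨hδ₀, hδ₁⟩, N, hgapN⟩ := hgap
  intro σ hσ ξ
  have hTpos : ∀ n, (T n).IsPositive := fun n ↦ isPositive_of_inner_nonneg_s17 (hpos n)
  have hmono : Antitone T := antitone_nat_of_succ_le fun n ↦ isPositive_of_inner_nonneg_s17 fun x ↦ by
    rw [sub_apply, inner_sub_left, sub_nonneg]
    exact hdec n x
  have hPξ : ∀ k, T k (P ξ) = P ξ := fun k ↦
    mem_fixedSubspace.mp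
      (fixedSubspace_le_of_tendsto hcontr hmono hTlim k (mem_fixedSubspace.mpr (hPmem ξ)))
  have hη : ξ - P ξ ∈ (⨅ k, (T k).fixedSubspace)ᗮ := (Submodule.mem_orthogonal' _ _).mpr
    fun y hy ↦ hPorth ξ y (mem_fixedSubspace.mp (iInf_fixedSubspace_le_of_tendsto hTlim hy))
  have hlim := tendsto_prodSeq_apply_zero_of_spectral_gap (fun n ↦ (hTpos n).isSelfAdjoint)
    hcontr (fixedSubspace_antitone hcontr hmono) (r := 1 - δ)
    (abs_lt.mpr ⟨by linarith, by linarith⟩)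
    (fun n hn x ↦ (hTpos n).abs_le_or_eq_one_of_mem_spectrum (hcontr n) (hgapN n hn))
    (tendsto_atTop_atTop_of_finite_preimage_singleton hσ) hη
  have hsplit : ∀ n, prodSeq T σ n ξ = P ξ + prodSeq T σ n (ξ - P ξ) := fun n ↦ by
    rw [map_sub, prodSeq_apply_of_forall_apply_eq_self hPξ, add_sub_cancel]
  simpa only [add_zero, ← hsplit] using hlim.const_add (P ξ)
end
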